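/- There exist constants C > 0 and r₀ > 1 such that for all r ≥ r₀, |R(r)| ≤ C·(log r)^(−(β+1)). -/

import Mathlib

/-!
With `y = α + log (1 + r²)`, `t = 1 + r²` and `D = y ^ (β + 1) - α ^ (β + 1)`, clearing
denominators shows that `R` is `α ^ β / y ^ (β + 1)` times a polynomial in `n`, `β` and the
quantities `(y - β) / y`, `(y - β) / t`, `(β + 1) / y`, `r² / t` and `w = y ^ (β + 1) / D`.
For `r ≥ e ^ (α + 1)` we have `2α + 1 ≤ y ≤ t`, so the first four lie in `[0, 1]`, and
`2 α ^ (β + 1) ≤ (2α) ^ (β + 1) ≤ y ^ (β + 1)` gives `w ≤ 2`. Since `log r ≤ y`, the prefactor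
is at most `α ^ β (log r) ^ (-(β + 1))`.
-/

open Real

/-- The scalar curvature of the metric, restricted to the radial variable `r`. -/
noncomputable def RscalFJ (n : ℕ) (α β : ℝ) (r : ℝ) : ℝ :=
  let y : ℝ := α + Real.log (1 + r ^ 2)
  let D : ℝ := y ^ (β + 1) - α ^ (β + 1)
  let g11 : ℝ := α ^ β * (1 + r ^ 2) / y ^ β
  let gv : ℝ := (β + 1) * α ^ β * r ^ 2 / D
  let R11 : ℝ := (β / y - 1) / (1 + r ^ 2) ^ 2
    + ((n : ℝ) - 1) * (β + 1) * y ^ β / (D * (1 + r ^ 2))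
    - β * r ^ 2 / (y ^ 2 * (1 + r ^ 2) ^ 2)
    + ((n : ℝ) - 1) * (β + 1) * y ^ (β - 1) * (β - y) * r ^ 2 / (D * (1 + r ^ 2) ^ 2)
    - ((n : ℝ) - 1) * (β + 1) ^ 2 * y ^ (2 * β) * r ^ 2 / (D ^ 2 * (1 + r ^ 2) ^ 2)
  let Rv : ℝ := (β / y - 1) / (1 + r ^ 2) - ((n : ℝ) - 1) / r ^ 2
    + ((n : ℝ) - 1) * (β + 1) * y ^ β / (D * (1 + r ^ 2))
  g11 * R11 + ((n : ℝ) - 1) * gv * Rv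

/-- `y ^ (β + 1) / α ^ β` times the curvature, written in `m = n - 1`, `t = 1 + r²`,
`s = r² / t` and `w = y ^ (β + 1) / D`. -/
noncomputable def rescaledCurvature (m β y t s w : ℝ) : ℝ :=
  (m - 1) * m * (β + 1) ^ 2 * s * w ^ 2 / y
    - ((y - β) / t + β * s / y + 2 * m * (β + 1) * ((y - β) / y) * s * w
      + (m - 1) * m * (β + 1) * w)

theorem abs_rescaledCurvature_le {m β y t s w : ℝ} (hm : 1 ≤ m) (hβ : 0 ≤ β)
    (hy : β + 1 ≤ y) (ht : y ≤ t) (hs₀ : 0 ≤ s) (hs₁ : s ≤ 1) (hw₀ : 0 ≤ w) (hw₂ : w ≤ 2) :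
    |rescaledCurvature m β y t s w| ≤ 8 * m ^ 2 * (β + 1) := by
  have hy₀ : 0 < y := by linarith
  have ht₀ : 0 < t := by linarith
  have hm₁ : 0 ≤ m - 1 := by linarith
  have hyβ : 0 ≤ y - β := by linarith
  have hq₁ : (y - β) / y ≤ 1 := div_le_one_of_le₀ (by linarith) hy₀.le
  have hv₁ : (y - β) / t ≤ 1 := div_le_one_of_le₀ (by linarith) (by linarith)
  have hc₁ : (β + 1) / y ≤ 1 := div_le_one_of_le₀ hy hy₀.le
  have hb₁ : β / y ≤ 1 := (div_le_div_of_nonneg_right (by linarith) hy₀.le).trans hc₁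
  have h_eq : rescaledCurvature m β y t s w =
      (m - 1) * m * (β + 1) * s * w ^ 2 * ((β + 1) / y)
        - ((y - β) / t + β / y * s + 2 * m * (β + 1) * ((y - β) / y) * s * w
          + (m - 1) * m * (β + 1) * w) := by
    unfold rescaledCurvature; ring
  have hA_le : (y - β) / t + β / y * s + 2 * m * (β + 1) * ((y - β) / y) * s * w
      + (m - 1) * m * (β + 1) * w ≤ 1 + 1 * 1 + 2 * m * (β + 1) * 1 * 1 * 2
        + (m - 1) * m * (β + 1) * 2 := by
    gcongr
  have hB_le : (m - 1) * m * (β + 1) * s * w ^ 2 * ((β + 1) / y)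
      ≤ (m - 1) * m * (β + 1) * 1 * 2 ^ 2 * 1 := by
    gcongr
  have hA₀ : 0 ≤ (y - β) / t + β / y * s + 2 * m * (β + 1) * ((y - β) / y) * s * w
      + (m - 1) * m * (β + 1) * w := by positivity
  have hB₀ : 0 ≤ (m - 1) * m * (β + 1) * s * w ^ 2 * ((β + 1) / y) := by positivity
  have h₁ : 1 ≤ m ^ 2 * (β + 1) := one_le_mul_of_one_le_of_one_le (one_le_pow₀ hm) (by linarith)
  rw [h_eq, abs_le]
  constructor <;> nlinarith

theorem RscalFJ_eq_mul_rescaledCurvature {n : ℕ} {α β r y : ℝ} (hr : r ≠ 0)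
    (hy_def : α + log (1 + r ^ 2) = y) (hy : 0 < y) (hD : y ^ (β + 1) ≠ α ^ (β + 1)) :
    RscalFJ n α β r = α ^ β / y ^ (β + 1) * rescaledCurvature ((n : ℝ) - 1) β y (1 + r ^ 2)
      (r ^ 2 / (1 + r ^ 2)) (y ^ (β + 1) / (y ^ (β + 1) - α ^ (β + 1))) := by
  have hD' : y ^ (β + 1) - α ^ (β + 1) ≠ 0 := sub_ne_zero.2 hD
  have hyβ : y ^ β ≠ 0 := (rpow_pos_of_pos hy β).ne'
  have ht : 1 + r ^ 2 ≠ 0 := by positivity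
  have h2β : y ^ (2 * β) = (y ^ β) ^ 2 := by
    rw [mul_comm]; exact_mod_cast rpow_mul_natCast hy.le β 2
  simp only [RscalFJ, hy_def]
  rw [rpow_sub_one hy.ne', h2β]
  generalize y ^ (β + 1) - α ^ (β + 1) = D at hD' ⊢
  rw [rpow_add_one hy.ne']
  unfold rescaledCurvature
  field_simp
  ring

theorem two_mul_rpow_le_rpow {x y p : ℝ} (hx : 0 ≤ x) (hxy : 2 * x ≤ y) (hp : 1 ≤ p) :
    2 * x ^ p ≤ y ^ p :=
  calc 2 * x ^ p ≤ 2 ^ p * x ^ p := by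
        gcongr; simpa using rpow_le_rpow_of_exponent_le one_le_two hp
    _ = (2 * x) ^ p := (mul_rpow zero_le_two hx).symm
    _ ≤ y ^ p := by gcongr

theorem log_one_add_sq_le {r : ℝ} (hr : 0 ≤ r) : log (1 + r ^ 2) ≤ 2 * r :=
  calc log (1 + r ^ 2) ≤ log ((1 + r) ^ 2) := log_le_log (by positivity) (by nlinarith)
    _ = 2 * log (1 + r) := by rw [log_pow, Nat.cast_two]
    _ ≤ 2 * r := by gcongr; linarith [log_le_sub_one_of_pos (by linarith : 0 < 1 + r)]

theorem log_le_log_one_add_sq {r : ℝ} (hr : 0 < r) : log r ≤ log (1 + r ^ 2) :=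
  log_le_log hr (by nlinarith)

theorem abs_RscalFJ_le {n : ℕ} {α β r : ℝ} (hm : 1 ≤ (n : ℝ) - 1) (hβ : 0 ≤ β) (hαβ : β < α)
    (hr : exp (α + 1) ≤ r) :
    |RscalFJ n α β r| ≤
      8 * ((n : ℝ) - 1) ^ 2 * (β + 1) * α ^ β / (α + log (1 + r ^ 2)) ^ (β + 1) := by
  have hα : 0 < α := hβ.trans_lt hαβ
  have hr₀ : 0 < r := (exp_pos _).trans_le hr
  have hlog : α + 1 ≤ log r := (le_log_iff_exp_le hr₀).2 hr
  obtain ⟨y, hy_def⟩ : ∃ y, α + log (1 + r ^ 2) = y := ⟨_, rfl⟩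
  rw [hy_def]
  have hy_lower : 2 * α + 1 ≤ y := by linarith [log_le_log_one_add_sq hr₀]
  have hy₀ : 0 < y := by linarith
  have hy_upper : y ≤ 1 + r ^ 2 := by
    nlinarith [log_one_add_sq_le hr₀.le, log_le_sub_one_of_pos hr₀]
  have hD : 2 * α ^ (β + 1) ≤ y ^ (β + 1) :=
    two_mul_rpow_le_rpow hα.le (by linarith) (by linarith)
  have hD₀ : α ^ (β + 1) < y ^ (β + 1) := by linarith [rpow_pos_of_pos hα (β + 1)]
  have hw : y ^ (β + 1) / (y ^ (β + 1) - α ^ (β + 1)) ≤ 2 := by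
    rw [div_le_iff₀ (sub_pos.2 hD₀)]; linarith
  have hbound := abs_rescaledCurvature_le (s := r ^ 2 / (1 + r ^ 2)) hm hβ (by linarith) hy_upper
    (by positivity) (div_le_one_of_le₀ (by linarith) (by positivity))
    (div_pos (by positivity) (sub_pos.2 hD₀)).le hw
  rw [RscalFJ_eq_mul_rescaledCurvature hr₀.ne' hy_def hy₀ hD₀.ne', abs_mul,
    abs_of_pos (by positivity), div_mul_eq_mul_div, mul_comm]
  gcongr

theorem stmt_17 (n : ℕ) (hn : 2 ≤ n) (α β : ℝ) (hβ : 0 ≤ β) (hαβ : β < α) :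
    ∃ C r₀ : ℝ, 0 < C ∧ 1 < r₀ ∧
      ∀ r : ℝ, r₀ ≤ r → |RscalFJ n α β r| ≤ C * (Real.log r) ^ (-(β + 1)) := by
  have hα : 0 < α := hβ.trans_lt hαβ
  have hm : (1 : ℝ) ≤ n - 1 := by linarith [show (2 : ℝ) ≤ n by exact_mod_cast hn]
  refine ⟨8 * ((n : ℝ) - 1) ^ 2 * (β + 1) * α ^ β, exp (α + 1), by positivity,
    one_lt_exp_iff.2 (by linarith), fun r hr => ?_⟩
  have hr₀ : 0 < r := (exp_pos _).trans_le hr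
  have hlog : α + 1 ≤ log r := (le_log_iff_exp_le hr₀).2 hr
  have hlog₀ : 0 < log r := by linarith
  rw [rpow_neg hlog₀.le, ← div_eq_mul_inv]
  refine (abs_RscalFJ_le hm hβ hαβ hr).trans ?_
  gcongr
  linarith [log_le_log_one_add_sq hr₀]
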